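/- Let M be a K_par(G)-module and d : G → M a map such that e_g·d(gh) = [g]·d(h) + e_{gh}·d(g) for all g, h ∈ G. Then the K-linear map δ : K_par(G) → M defined on the elements e[g] of S(G) (e ∈ E(S(G))) by δ(e[g]) = e·d(g) is well defined and is a partial derivation: δ(st) = s·δ(t) + ε(st)·δ(s) for all s,t ∈ S(G). -/

import Mathlib

/-- A concrete model of Exel's inverse monoid `S(G)`: pairs `(E, g)` where `E` is a
finite subset of `G` containing `1` and `g`, with product `(E,g)(F,h) = (E ∪ gF, gh)`. -/
@[ext]
structure ExelS (G : Type*) [Group G] [DecidableEq G] where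
  carrier : Finset G
  elt : G
  one_mem : (1 : G) ∈ carrier
  elt_mem : elt ∈ carrier

namespace ExelS

variable {G : Type*} [Group G] [DecidableEq G]

instance : Mul (ExelS G) :=
  ⟨fun s t =>
    ⟨s.carrier ∪ t.carrier.image (s.elt * ·), s.elt * t.elt,
      Finset.mem_union_left _ s.one_mem,
      Finset.mem_union_right _ (Finset.mem_image_of_mem _ t.elt_mem)⟩⟩

instance : One (ExelS G) :=
  ⟨⟨{1}, 1, Finset.mem_singleton_self 1, Finset.mem_singleton_self 1⟩⟩

/-- The inverse in the inverse monoid `S(G)`. -/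
instance : Inv (ExelS G) :=
  ⟨fun s =>
    ⟨s.carrier.image (s.elt⁻¹ * ·), s.elt⁻¹,
      Finset.mem_image.2 ⟨s.elt, s.elt_mem, by simp⟩,
      Finset.mem_image.2 ⟨1, s.one_mem, by simp⟩⟩⟩

@[simp] lemma mul_carrier (s t : ExelS G) :
    (s * t).carrier = s.carrier ∪ t.carrier.image (s.elt * ·) := rfl

@[simp] lemma mul_elt (s t : ExelS G) : (s * t).elt = s.elt * t.elt := rfl

@[simp] lemma one_carrier : (1 : ExelS G).carrier = {1} := rfl

@[simp] lemma one_elt : (1 : ExelS G).elt = 1 := rfl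

@[simp] lemma inv_carrier (s : ExelS G) :
    s⁻¹.carrier = s.carrier.image (s.elt⁻¹ * ·) := rfl

@[simp] lemma inv_elt (s : ExelS G) : s⁻¹.elt = s.elt⁻¹ := rfl

instance : Monoid (ExelS G) where
  mul_assoc a b c := by
    ext x
    · simp only [mul_carrier, Finset.image_union, Finset.image_image, Finset.union_assoc,
        Finset.mem_union, Finset.mem_image, Function.comp]
      constructor <;> rintro (h | h | ⟨y, hy, rfl⟩) <;> simp_all [mul_assoc]
    · simp [mul_assoc]
  one_mul s := by
    ext x
    · simp only [mul_carrier, one_carrier, one_elt, one_mul, Finset.image_id']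
      constructor
      · intro h
        rcases Finset.mem_union.1 h with h | h
        · exact (Finset.mem_singleton.1 h) ▸ s.one_mem
        · exact h
      · exact fun h => Finset.mem_union_right _ h
    · simp
  mul_one s := by
    ext x
    · simp only [mul_carrier, one_carrier, Finset.image_singleton, mul_one]
      constructor
      · intro h
        rcases Finset.mem_union.1 h with h | h
        · exact h
        · exact (Finset.mem_singleton.1 h) ▸ s.elt_mem
      · exact fun h => Finset.mem_union_left _ h
    · simp

/-- The canonical generators `[g]` of Exel's monoid. -/
def br (g : G) : ExelS G := ⟨{1, g}, g, by simp, by simp⟩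

/-- The idempotents `e_g = [g][g⁻¹]`. -/
def eIdem (g : G) : ExelS G := br g * (br g⁻¹ : ExelS G)

end ExelS

/-!
Extend `s ↦ ε(s) · d(s.elt)` `K`-linearly from the basis `S(G)` of `K_par(G)`.
Taking `h = g⁻¹` in the cocycle identity gives `d 1 = 0` and `e_g · d g = d g`, which is the
well-definedness on `e[g]`. For the Leibniz rule, multiply the cocycle identity for
`(s.elt, t.elt)` by `ε(st)`: this idempotent absorbs `e_{s.elt}`, `e_{(st).elt}` and `ε(s)`, since
their carriers lie in that of `st`, and `ε(st)[s.elt] = s ε(t)`.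
-/

namespace ExelS

variable {G : Type*} [Group G] [DecidableEq G]

/-- `ε(s) = s s⁻¹` (see `mul_inv_eq_rangeIdem`). -/
def rangeIdem (s : ExelS G) : ExelS G := ⟨s.carrier, 1, s.one_mem, s.one_mem⟩

@[simp] lemma rangeIdem_carrier (s : ExelS G) : (rangeIdem s).carrier = s.carrier := rfl

@[simp] lemma rangeIdem_elt (s : ExelS G) : (rangeIdem s).elt = 1 := rfl

@[simp] lemma br_elt (g : G) : (br g).elt = g := rfl

@[simp] lemma br_carrier (g : G) : (br g).carrier = {1, g} := rfl

@[simp] lemma br_one : (br 1 : ExelS G) = 1 := by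
  ext x <;> simp [br]

lemma carrier_mul_of_elt_eq_one {f : ExelS G} (hf : f.elt = 1) (s : ExelS G) :
    (f * s).carrier = f.carrier ∪ s.carrier := by
  simp [hf, Finset.image_id']

lemma elt_eq_one_of_mul_self {e : ExelS G} (he : e * e = e) : e.elt = 1 :=
  mul_eq_left.1 (congrArg elt he)

lemma mul_inv_eq_rangeIdem (s : ExelS G) : s * s⁻¹ = rangeIdem s := by
  ext x <;> simp

@[simp] lemma eIdem_elt (g : G) : (eIdem g).elt = 1 := by simp [eIdem]

lemma mem_eIdem_carrier {x g : G} : x ∈ (eIdem g).carrier ↔ x = 1 ∨ x = g := by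
  simp only [eIdem, mul_carrier, br_carrier, br_elt, Finset.mem_union, Finset.mem_image,
    Finset.mem_insert, Finset.mem_singleton]
  constructor
  · rintro (h | ⟨y, rfl | rfl, rfl⟩) <;> simp_all
  · rintro (rfl | rfl) <;> simp

@[simp] lemma eIdem_one : (eIdem 1 : ExelS G) = 1 := by
  simp [eIdem]

lemma eIdem_mul_br (g : G) : eIdem g * br g = br g := by
  ext x
  · simp only [carrier_mul_of_elt_eq_one (eIdem_elt g), Finset.mem_union, mem_eIdem_carrier,
      br_carrier, Finset.mem_insert, Finset.mem_singleton]
    tauto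
  · simp

lemma rangeIdem_mul_eIdem_of_mem {s : ExelS G} {g : G} (hg : g ∈ s.carrier) :
    rangeIdem s * eIdem g = rangeIdem s := by
  ext x
  · simp only [carrier_mul_of_elt_eq_one (rangeIdem_elt s), rangeIdem_carrier,
      Finset.mem_union, mem_eIdem_carrier]
    refine ⟨?_, Or.inl⟩
    rintro (h | rfl | rfl)
    exacts [h, s.one_mem, hg]
  · simp

lemma rangeIdem_mul_rangeIdem_of_subset {s t : ExelS G} (h : t.carrier ⊆ s.carrier) :
    rangeIdem s * rangeIdem t = rangeIdem s := by
  ext x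
  · simp [carrier_mul_of_elt_eq_one (rangeIdem_elt s), Finset.union_eq_left.2 h]
  · simp

lemma rangeIdem_mul_br_of_elt_eq_one {e : ExelS G} (he : e.elt = 1) (g : G) :
    rangeIdem (e * br g) = e * eIdem g := by
  ext x
  · simp only [rangeIdem_carrier, carrier_mul_of_elt_eq_one he, Finset.mem_union,
      mem_eIdem_carrier, br_carrier, Finset.mem_insert, Finset.mem_singleton]
  · simp [he]

lemma rangeIdem_mul_mul_br (s t : ExelS G) :
    rangeIdem (s * t) * br s.elt = s * rangeIdem t := by
  ext x
  · simp only [carrier_mul_of_elt_eq_one (rangeIdem_elt _), rangeIdem_carrier, mul_carrier,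
      br_carrier, Finset.mem_union, Finset.mem_insert, Finset.mem_singleton, Finset.mem_image]
    have := s.one_mem
    have := s.elt_mem
    aesop
  · simp

end ExelS

open ExelS MonoidAlgebra

lemma MonoidAlgebra.of_smul_of_smul {K S M : Type*} [Semiring K] [Monoid S] [AddCommMonoid M]
    [Module (MonoidAlgebra K S) M] (s t : S) (m : M) :
    of K S s • of K S t • m = of K S (s * t) • m := by
  rw [smul_smul, map_mul]

section Cocycle

variable {G : Type*} [Group G] [DecidableEq G] {K : Type*} [Semiring K]
  {M : Type*} [AddCommGroup M] [Module (MonoidAlgebra K (ExelS G)) M]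

variable (K) in
def IsPartialCocycle (d : G → M) : Prop :=
  ∀ g h : G, of K (ExelS G) (eIdem g) • d (g * h) =
    of K (ExelS G) (br g) • d h + of K (ExelS G) (eIdem (g * h)) • d g

namespace IsPartialCocycle

variable {d : G → M}

lemma map_one (hd : IsPartialCocycle K d) : d 1 = 0 := by
  have h := hd 1 1
  rw [mul_one, eIdem_one, br_one, _root_.map_one, one_smul] at h
  exact right_eq_add.1 h

lemma eIdem_smul (hd : IsPartialCocycle K d) (g : G) : of K (ExelS G) (eIdem g) • d g = d g := by
  have h := hd g g⁻¹
  rw [mul_inv_cancel, hd.map_one, smul_zero, eIdem_one, _root_.map_one, one_smul, eq_comm,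
    add_eq_zero_iff_neg_eq'] at h
  rw [neg_eq_iff_eq_neg.1 h, smul_neg, of_smul_of_smul, eIdem_mul_br]

end IsPartialCocycle

end Cocycle

section PartialDerivation

variable {G : Type*} [Group G] [DecidableEq G] {K : Type*} [Semiring K]
  {M : Type*} [AddCommGroup M] [Module (MonoidAlgebra K (ExelS G)) M] [Module K M]

variable (K) in
noncomputable def partialDerivationOfCocycle (d : G → M) :
    MonoidAlgebra K (ExelS G) →ₗ[K] M :=
  Finsupp.linearCombination K (fun s : ExelS G => of K (ExelS G) (rangeIdem s) • d s.elt) ∘ₗ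
    (MonoidAlgebra.basis (ExelS G) K).repr.toLinearMap

lemma partialDerivationOfCocycle_of (d : G → M) (s : ExelS G) :
    partialDerivationOfCocycle K d (of K (ExelS G) s) =
      of K (ExelS G) (rangeIdem s) • d s.elt := by
  rw [partialDerivationOfCocycle, LinearMap.comp_apply, LinearEquiv.coe_coe, of_apply,
    ← basis_apply, Module.Basis.repr_self, Finsupp.linearCombination_single, one_smul]

lemma partialDerivationOfCocycle_of_mul_br {d : G → M} (hd : IsPartialCocycle K d)
    {e : ExelS G} (he : e * e = e) (g : G) :
    partialDerivationOfCocycle K d (of K (ExelS G) (e * br g)) = of K (ExelS G) e • d g := by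
  have he₁ := elt_eq_one_of_mul_self he
  rw [partialDerivationOfCocycle_of, rangeIdem_mul_br_of_elt_eq_one he₁, mul_elt, he₁, one_mul,
    br_elt, ← of_smul_of_smul, hd.eIdem_smul]

lemma partialDerivationOfCocycle_of_mul {d : G → M} (hd : IsPartialCocycle K d)
    (s t : ExelS G) :
    partialDerivationOfCocycle K d (of K (ExelS G) (s * t)) =
      of K (ExelS G) s • partialDerivationOfCocycle K d (of K (ExelS G) t) +
        of K (ExelS G) ((s * t) * (s * t)⁻¹) •
          partialDerivationOfCocycle K d (of K (ExelS G) s) := by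
  have hu_s : rangeIdem (s * t) * eIdem s.elt = rangeIdem (s * t) :=
    rangeIdem_mul_eIdem_of_mem (Finset.mem_union_left _ s.elt_mem)
  have hu_st : rangeIdem (s * t) * eIdem (s.elt * t.elt) = rangeIdem (s * t) :=
    rangeIdem_mul_eIdem_of_mem (s * t).elt_mem
  have hu_rs : rangeIdem (s * t) * rangeIdem s = rangeIdem (s * t) :=
    rangeIdem_mul_rangeIdem_of_subset (s := s * t) Finset.subset_union_left
  simp only [partialDerivationOfCocycle_of, mul_inv_eq_rangeIdem, of_smul_of_smul, hu_rs]
  calc of K (ExelS G) (rangeIdem (s * t)) • d (s.elt * t.elt)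
      = of K (ExelS G) (rangeIdem (s * t)) •
          of K (ExelS G) (eIdem s.elt) • d (s.elt * t.elt) := by
        rw [of_smul_of_smul, hu_s]
    _ = of K (ExelS G) (rangeIdem (s * t)) • (of K (ExelS G) (br s.elt) • d t.elt +
          of K (ExelS G) (eIdem (s.elt * t.elt)) • d s.elt) := by
        rw [hd]
    _ = of K (ExelS G) (s * rangeIdem t) • d t.elt +
          of K (ExelS G) (rangeIdem (s * t)) • d s.elt := by
        rw [smul_add, of_smul_of_smul, of_smul_of_smul, rangeIdem_mul_mul_br, hu_st]

end PartialDerivation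

open ExelS MonoidAlgebra in
theorem exists_partialDerivation_of_cocycle_general
    {G : Type*} [Group G] [DecidableEq G] {K : Type*} [CommRing K]
    {M : Type*} [AddCommGroup M] [Module (MonoidAlgebra K (ExelS G)) M]
    [Module K M]
    (d : G → M)
    (hd : ∀ g h : G,
      of K (ExelS G) (eIdem g) • d (g * h) =
        of K (ExelS G) (br g) • d h + of K (ExelS G) (eIdem (g * h)) • d g) :
    ∃ δ : MonoidAlgebra K (ExelS G) →ₗ[K] M,
      (∀ (e : ExelS G) (g : G), e * e = e →
        δ (of K (ExelS G) (e * br g)) = of K (ExelS G) e • d g) ∧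
      ∀ s t : ExelS G,
        δ (of K (ExelS G) (s * t)) =
          of K (ExelS G) s • δ (of K (ExelS G) t) +
            of K (ExelS G) ((s * t) * (s * t)⁻¹) • δ (of K (ExelS G) s) :=
  ⟨partialDerivationOfCocycle K d, fun _ _ he => partialDerivationOfCocycle_of_mul_br hd he _,
    partialDerivationOfCocycle_of_mul hd⟩

open ExelS MonoidAlgebra in
/-- Let `M` be a `K_par(G)`-module and `d : G → M` satisfy
`e_g·d(gh) = [g]·d(h) + e_{gh}·d(g)`.  Then the `K`-linear map `δ : K_par(G) → M`
determined on the elements `e[g]` of `S(G)` (`e` idempotent) by `δ(e[g]) = e·d(g)`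
is well defined and is a partial derivation. -/
theorem exists_partialDerivation_of_cocycle
    {G : Type*} [Group G] [DecidableEq G] {K : Type*} [CommRing K]
    {M : Type*} [AddCommGroup M] [Module (MonoidAlgebra K (ExelS G)) M]
    [Module K M] [IsScalarTower K (MonoidAlgebra K (ExelS G)) M]
    (d : G → M)
    (hd : ∀ g h : G,
      of K (ExelS G) (eIdem g) • d (g * h) =
        of K (ExelS G) (br g) • d h + of K (ExelS G) (eIdem (g * h)) • d g) :
    ∃ δ : MonoidAlgebra K (ExelS G) →ₗ[K] M,
      (∀ (e : ExelS G) (g : G), e * e = e →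
        δ (of K (ExelS G) (e * br g)) = of K (ExelS G) e • d g) ∧
      ∀ s t : ExelS G,
        δ (of K (ExelS G) (s * t)) =
          of K (ExelS G) s • δ (of K (ExelS G) t) +
            of K (ExelS G) ((s * t) * (s * t)⁻¹) • δ (of K (ExelS G) s) :=
  exists_partialDerivation_of_cocycle_general d hd
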